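/- If B and C are both absorbing subalgebras of an algebra A, then the intersection B ∩ C is an absorbing subalgebra of A. -/
import Mathlib


structure Signature : Type 1 where
  symbols : Type
  arity : symbols → ℕ

structure UAlgebra (σ : Signature) : Type 1 where
  carrier : Type
  op : ∀ s : σ.symbols, (Fin (σ.arity s) → carrier) → carrier

inductive Term (σ : Signature) (n : ℕ) : Type
  | var : Fin n → Term σ n
  | app (s : σ.symbols) : (Fin (σ.arity s) → Term σ n) → Term σ n

def Term.eval {σ : Signature} (A : UAlgebra σ) {n : ℕ} :
    Term σ n → (Fin n → A.carrier) → A.carrier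
  | .var i, x => x i
  | .app s ts, x => A.op s fun j => Term.eval A (ts j) x

/-- `B` is a subuniverse of the algebra `A`. -/
def Subuniverse {σ : Signature} (A : UAlgebra σ) (B : Set A.carrier) : Prop :=
  ∀ (s : σ.symbols) (a : Fin (σ.arity s) → A.carrier), (∀ i, a i ∈ B) → A.op s a ∈ B

/-- `B` absorbs `A` with respect to the term `t`. -/
def AbsorbsWith {σ : Signature} (A : UAlgebra σ) (B : Set A.carrier) {n : ℕ} (t : Term σ n) : Prop :=
  ∀ (k : Fin n) (a : Fin n → A.carrier), (∀ i, i ≠ k → a i ∈ B) → t.eval A a ∈ B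

/-- `C` absorbs the subalgebra with universe `B` (inside the ambient algebra `A`)
with respect to the term `t`. -/
def AbsorbsWithIn {σ : Signature} (A : UAlgebra σ) (B C : Set A.carrier) {n : ℕ}
    (t : Term σ n) : Prop :=
  ∀ (k : Fin n) (a : Fin n → A.carrier), (∀ i, a i ∈ B) → (∀ i, i ≠ k → a i ∈ C) →
    t.eval A a ∈ C

/-- `B` is an absorbing subalgebra (subuniverse) of `A`. -/
def Absorbing {σ : Signature} (A : UAlgebra σ) (B : Set A.carrier) : Prop :=
  Subuniverse A B ∧ ∃ (n : ℕ) (t : Term σ n), AbsorbsWith A B t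

/-- `B` is a proper absorbing subalgebra of `A`: `∅ ≠ B ≠ A`. -/
def ProperAbsorbing {σ : Signature} (A : UAlgebra σ) (B : Set A.carrier) : Prop :=
  Absorbing A B ∧ B.Nonempty ∧ B ≠ Set.univ

/-- `C` is a minimal absorbing subalgebra of `A`. -/
def MinAbsorbing {σ : Signature} (A : UAlgebra σ) (C : Set A.carrier) : Prop :=
  Absorbing A C ∧ C.Nonempty ∧ ∀ C' ⊆ C, Absorbing A C' → C'.Nonempty → C' = C

/-- All (basic, equivalently term) operations of `A` are idempotent. -/
def Idempotent {σ : Signature} (A : UAlgebra σ) : Prop :=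
  ∀ (s : σ.symbols) (a : A.carrier), A.op s (fun _ => a) = a

/-- `t` is a Taylor term of the algebra `A`. -/
def IsTaylorTerm {σ : Signature} (A : UAlgebra σ) {k : ℕ} (t : Term σ k) : Prop :=
  (∀ a : A.carrier, t.eval A (fun _ => a) = a) ∧
  ∀ j : Fin k, ∃ u v : Fin k → Fin 2, u j = 0 ∧ v j = 1 ∧
    ∀ x : Fin 2 → A.carrier, t.eval A (fun i => x (u i)) = t.eval A (fun i => x (v i))

/-- The product of two algebras of the same signature. -/
def UAlgebra.prod {σ : Signature} (A B : UAlgebra σ) : UAlgebra σ where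
  carrier := A.carrier × B.carrier
  op s x := (A.op s fun i => (x i).1, B.op s fun i => (x i).2)

/-- The `k`-th power of an algebra. -/
def UAlgebra.pow {σ : Signature} (A : UAlgebra σ) (k : ℕ) : UAlgebra σ where
  carrier := Fin k → A.carrier
  op s x := fun j => A.op s fun i => x i j

/-- `R ⊆ A × B` is subdirect: both projections are onto. -/
def Subdirect2 {α β : Type} (R : Set (α × β)) : Prop :=
  (∀ a, ∃ b, (a, b) ∈ R) ∧ ∀ b, ∃ a, (a, b) ∈ R

/-- `a` and `a'` are linked in `R` (connected in the bipartite graph of `R`). -/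
def LinkedPair {α β : Type} (R : Set (α × β)) (a a' : α) : Prop :=
  Relation.ReflTransGen (fun x y => ∃ b, (x, b) ∈ R ∧ (y, b) ∈ R) a a'

/-- `R` is linked: any two elements of the projection of `R` to the first
coordinate are `R`-linked. -/
def IsLinked {α β : Type} (R : Set (α × β)) : Prop :=
  ∀ a a', (∃ b, (a, b) ∈ R) → (∃ b, (a', b) ∈ R) → LinkedPair R a a'

/-- Cyclic shift of a `k`-tuple. -/
def cycShift {α : Type} {k : ℕ} (x : Fin k → α) : Fin k → α := fun i =>
  x ⟨(i.val + 1) % k, Nat.mod_lt _ (Nat.lt_of_le_of_lt (Nat.zero_le _) i.isLt)⟩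

/-- `t` is a cyclic term of `A`: idempotent and invariant under cyclic shift. -/
def IsCyclicTerm {σ : Signature} (A : UAlgebra σ) {k : ℕ} (t : Term σ k) : Prop :=
  (∀ a : A.carrier, t.eval A (fun _ => a) = a) ∧
  ∀ x : Fin k → A.carrier, t.eval A x = t.eval A (cycShift x)


def Term.subst {σ : Signature} {m n : ℕ} : Term σ m → (Fin m → Term σ n) → Term σ n
  | .var i, f => f i
  | .app s ts, f => .app s fun j => (ts j).subst f

theorem Term.eval_subst {σ : Signature} (A : UAlgebra σ) {m n : ℕ} (t : Term σ m)
    (f : Fin m → Term σ n) (x : Fin n → A.carrier) :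
    (t.subst f).eval A x = t.eval A (fun i => (f i).eval A x) := by
  induction t with
  | var i => rfl
  | app s ts ih => simp only [Term.subst, Term.eval, ih]

theorem eval_mem {σ : Signature} (A : UAlgebra σ) {B : Set A.carrier}
    (hB : Subuniverse A B) {n : ℕ} (t : Term σ n) (x : Fin n → A.carrier)
    (hx : ∀ i, x i ∈ B) : t.eval A x ∈ B := by
  induction t with
  | var i => exact hx i
  | app s ts ih => exact hB s _ fun j => ih j

/-- The intersection of two absorbing subalgebras of `A` is an
absorbing subalgebra of `A`. -/
theorem absorbing_inter {σ : Signature} (A : UAlgebra σ) (B C : Set A.carrier)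
    (hB : Absorbing A B) (hC : Absorbing A C) :
    Absorbing A (B ∩ C) := by
  obtain ⟨hBs, m, s, hs⟩ := hB
  obtain ⟨hCs, n, t, ht⟩ := hC
  have hIs : Subuniverse A (B ∩ C) := fun o a h =>
    ⟨hBs o a fun i => (h i).1, hCs o a fun i => (h i).2⟩
  refine ⟨hIs, m * n, s.subst (fun i => t.subst fun j => .var (finProdFinEquiv (i, j))), ?_⟩
  intro k a ha
  rw [Term.eval_subst]
  set y : Fin m → A.carrier :=
    fun i => (Term.subst t fun j => Term.var (finProdFinEquiv (i, j))).eval A a with hy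
  have hyval : ∀ i, y i = t.eval A fun j => a (finProdFinEquiv (i, j)) := by
    intro i; simp only [hy]; rw [Term.eval_subst]; rfl
  set i₀ := (finProdFinEquiv.symm k).1
  set j₀ := (finProdFinEquiv.symm k).2
  have hk : finProdFinEquiv (i₀, j₀) = k := by
    simp only [i₀, j₀, Prod.mk.eta, Equiv.apply_symm_apply]
  have hne : ∀ i j, (i, j) ≠ (i₀, j₀) → finProdFinEquiv (i, j) ≠ k := by
    intro i j hij hcon
    exact hij (by rw [← hk] at hcon; exact finProdFinEquiv.injective hcon)
  have hyBC : ∀ i, i ≠ i₀ → y i ∈ B ∩ C := by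
    intro i hi
    rw [hyval]
    exact eval_mem A hIs t _ fun j => ha _ (hne i j (by simp [hi]))
  have hyC : ∀ i, y i ∈ C := by
    intro i
    by_cases hi : i = i₀
    · subst hi
      rw [hyval]
      exact ht j₀ _ fun j hj => (ha _ (hne i₀ j (by simp [hj]))).2
    · exact (hyBC i hi).2
  exact ⟨hs i₀ y fun i hi => (hyBC i hi).1, eval_mem A hCs s y hyC⟩
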